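/- Let A = KQ/I be a special biserial algebra over an algebraically closed field K, let w be a string for A and M(w) the string module with its standard basis z_0,…,z_r. Then for every subrepresentation L of M(w) there exists a subrepresentation L̃ of M(w) with dim L̃ = dim L such that at every vertex i the subspace L̃_i is spanned by a subset of the standard basis vectors lying at i; equivalently, L̃ is the subrepresentation of M(w) spanned by {z_j : j ∈ J} for a subset J ⊆ {0,…,r} defining a subrepresentation of the thin representation T(w). In particular, L̃ is a direct sum of string modules and does not embed diagonally into M(w). -/

import Mathlib

attribute [local instance] Classical.propDecidable

/-- A finite quiver: finite sets of vertices and arrows with source and target maps. -/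
structure FinQuiver where
  V : Type
  A : Type
  [fintypeV : Fintype V]
  [decEqV : DecidableEq V]
  [fintypeA : Fintype A]
  [decEqA : DecidableEq A]
  s : A → V
  t : A → V

attribute [instance] FinQuiver.fintypeV FinQuiver.decEqV FinQuiver.fintypeA FinQuiver.decEqA

/-- A finite-dimensional representation of a finite quiver over a field `K`. -/
structure QRep (K : Type) [Field K] (Q : FinQuiver) where
  M : Q.V → Type
  [acg : ∀ i, AddCommGroup (M i)]
  [mod : ∀ i, Module K (M i)]
  [fd : ∀ i, FiniteDimensional K (M i)]
  φ : ∀ a : Q.A, M (Q.s a) →ₗ[K] M (Q.t a)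

attribute [instance] QRep.acg QRep.mod QRep.fd

/-- A subrepresentation: a subspace at every vertex, compatible with the arrow maps. -/
structure QSubRep {K : Type} [Field K] {Q : FinQuiver} (R : QRep K Q) where
  L : ∀ i, Submodule K (R.M i)
  compat : ∀ a : Q.A, ∀ x ∈ L (Q.s a), R.φ a x ∈ L (Q.t a)

def QSubRep.le {K : Type} [Field K] {Q : FinQuiver} {R : QRep K Q} (N N' : QSubRep R) : Prop :=
  ∀ i, N.L i ≤ N'.L i

/-- The dimension vector of a representation. -/
noncomputable def QRep.dimVec {K : Type} [Field K] {Q : FinQuiver} (R : QRep K Q) (i : Q.V) : ℕ :=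
  Module.finrank K (R.M i)

/-- Standard inner product of a real vector with a dimension vector. -/
def stabInner {Q : FinQuiver} (v : Q.V → ℝ) (d : Q.V → ℕ) : ℝ :=
  ∑ i, v i * (d i : ℝ)

/-- `v`-semistability of a representation. -/
def IsSemistable {K : Type} [Field K] {Q : FinQuiver} (R : QRep K Q) (v : Q.V → ℝ) : Prop :=
  stabInner v R.dimVec = 0 ∧
    ∀ N : QSubRep R, stabInner v (fun i => Module.finrank K (N.L i)) ≤ 0

/-- The stability space of a representation. -/
def stabSpace {K : Type} [Field K] {Q : FinQuiver} (R : QRep K Q) : Set (Q.V → ℝ) :=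
  {v | IsSemistable R v}

/-- `v`-stability of a representation. -/
def IsStable {K : Type} [Field K] {Q : FinQuiver} (R : QRep K Q) (v : Q.V → ℝ) : Prop :=
  stabInner v R.dimVec = 0 ∧
    ∀ N : QSubRep R, (∃ i, N.L i ≠ ⊥) → (∃ i, N.L i ≠ ⊤) →
      stabInner v (fun i => Module.finrank K (N.L i)) < 0

/-- The thin sincere representation with identity maps: `K` at every vertex. -/
noncomputable def thinRep (K : Type) [Field K] (Q : FinQuiver) : QRep K Q where
  M _ := K
  φ _ := LinearMap.id

/-- The set of all finite non-negative real linear combinations of elements of `X`. -/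
def coneSpan {E : Type} [AddCommMonoid E] [Module ℝ E] (X : Set E) : Set E :=
  {x | ∃ (n : ℕ) (c : Fin n → ℝ) (f : Fin n → E),
    (∀ j, 0 ≤ c j) ∧ (∀ j, f j ∈ X) ∧ x = ∑ j, c j • f j}

/-- The standard basis vector of `ℝ^{Q₀}` at a vertex. -/
noncomputable def eVec (Q : FinQuiver) (i : Q.V) : Q.V → ℝ := Pi.single i 1

/-- A subrepresentation viewed as a representation in its own right. -/
noncomputable def QSubRep.toRep {K : Type} [Field K] {Q : FinQuiver} {R : QRep K Q}
    (N : QSubRep R) : QRep K Q where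
  M i := ↥(N.L i)
  φ a := (R.φ a).restrict (fun x hx => N.compat a x hx)

/-- The quotient of a representation by a subrepresentation. -/
noncomputable def QRep.quotBy {K : Type} [Field K] {Q : FinQuiver} (R : QRep K Q)
    (N : QSubRep R) : QRep K Q where
  M i := R.M i ⧸ N.L i
  φ a := Submodule.mapQ _ _ (R.φ a) (fun x hx => N.compat a x hx)

/-- The quotient `N'/N` of nested subrepresentations, as a representation. -/
noncomputable def quotRep {K : Type} [Field K] {Q : FinQuiver} (R : QRep K Q)
    (N N' : QSubRep R) (h : QSubRep.le N N') : QRep K Q where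
  M i := ↥(N'.L i) ⧸ Submodule.comap (N'.L i).subtype (N.L i)
  φ a := Submodule.mapQ _ _ ((R.φ a).restrict (fun x hx => N'.compat a x hx))
    (by
      intro x hx
      simp only [Submodule.mem_comap, Submodule.subtype_apply,
        LinearMap.restrict_apply] at hx ⊢
      exact N.compat a _ hx)

/-- A representation is nonzero if some vertex space is nonzero. -/
def QRep.Nonzero {K : Type} [Field K] {Q : FinQuiver} (R : QRep K Q) : Prop :=
  ∃ i, Module.finrank K (R.M i) ≠ 0

/-- Indecomposability: nonzero and admitting no internal direct sum decomposition into two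
nonzero subrepresentations. -/
def Indecomposable {K : Type} [Field K] {Q : FinQuiver} (R : QRep K Q) : Prop :=
  R.Nonzero ∧
    ¬∃ U W : QSubRep R, (∃ i, U.L i ≠ ⊥) ∧ (∃ i, W.L i ≠ ⊥) ∧
      (∀ i, U.L i ⊓ W.L i = ⊥) ∧ (∀ i, U.L i ⊔ W.L i = ⊤)

/-- Isomorphism of representations. -/
def RepIso {K : Type} [Field K] {Q : FinQuiver} (R R' : QRep K Q) : Prop :=
  ∃ f : ∀ i, R.M i ≃ₗ[K] R'.M i,
    ∀ (a : Q.A) (x : R.M (Q.s a)), f (Q.t a) (R.φ a x) = R'.φ a (f (Q.s a) x)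

/-- The support of a representation. -/
def QRep.supp {K : Type} [Field K] {Q : FinQuiver} (R : QRep K Q) : Set Q.V :=
  {i | Module.finrank K (R.M i) ≠ 0}

/-- The stability space restricted to the coordinate subspace of the support. -/
def Dsupp {K : Type} [Field K] {Q : FinQuiver} (R : QRep K Q) : Set (Q.V → ℝ) :=
  stabSpace R ∩ {v | ∀ i, i ∉ R.supp → v i = 0}

/-- Standard inner product on `ℝ^V`. -/
def rInner {V : Type} [Fintype V] (a v : V → ℝ) : ℝ := ∑ i, a i * v i

/-- A face of a polyhedral cone. -/
def IsFace {V : Type} [Fintype V] (C F : Set (V → ℝ)) : Prop :=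
  ∃ a : V → ℝ, (∀ v ∈ C, rInner a v ≤ 0) ∧ F = C ∩ {v | rInner a v = 0}

/-- The dimension of the linear span of a subset of `ℝ^V`. -/
noncomputable def coneDim {V : Type} [Fintype V] (F : Set (V → ℝ)) : ℕ :=
  Module.finrank ℝ ↥(Submodule.span ℝ F)

/-- A facet: a face of codimension one. -/
def IsFacet {V : Type} [Fintype V] (C F : Set (V → ℝ)) : Prop :=
  IsFace C F ∧ coneDim F + 1 = coneDim C

/-- Composability of a list of arrows (a directed path). -/
def PathComposable {Q : FinQuiver} : List Q.A → Prop
  | [] => True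
  | [_] => True
  | a :: b :: l => Q.t a = Q.s b ∧ PathComposable (b :: l)

/-- Letters: direct arrows (`inl`) and formal inverses of arrows (`inr`). -/
abbrev Letter (Q : FinQuiver) := Q.A ⊕ Q.A

/-- Source of a letter. -/
def lsrc {Q : FinQuiver} : Letter Q → Q.V
  | Sum.inl a => Q.s a
  | Sum.inr a => Q.t a

/-- Target of a letter. -/
def ltgt {Q : FinQuiver} : Letter Q → Q.V
  | Sum.inl a => Q.t a
  | Sum.inr a => Q.s a

/-- The formal inverse of a letter. -/
def linv {Q : FinQuiver} : Letter Q → Letter Q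
  | Sum.inl a => Sum.inr a
  | Sum.inr a => Sum.inl a

/-- The underlying quiver arrow of a letter. -/
def und {Q : FinQuiver} : Letter Q → Q.A
  | Sum.inl a => a
  | Sum.inr a => a

/-- A letter is direct if it is an arrow (not a formal inverse). -/
def isDir {Q : FinQuiver} (c : Letter Q) : Prop := c.isLeft = true

/-- Composability of a word of letters. -/
def WordComposable {Q : FinQuiver} : List (Letter Q) → Prop
  | [] => True
  | [_] => True
  | c :: d :: l => ltgt c = lsrc d ∧ WordComposable (d :: l)

/-- Reducedness of a word: no letter is followed by its own inverse. -/
def WordReduced {Q : FinQuiver} : List (Letter Q) → Prop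
  | [] => True
  | [_] => True
  | c :: d :: l => d ≠ linv c ∧ WordReduced (d :: l)

/-- A bound quiver: a set of (monomial) relations generating an admissible ideal. -/
structure BoundQuiver (Q : FinQuiver) where
  rel : List Q.A → Prop
  adm_comp : ∀ u, rel u → PathComposable u ∧ 2 ≤ u.length
  adm_bound : ∃ N : ℕ, ∀ u : List Q.A, PathComposable u → N ≤ u.length →
    ∃ u', rel u' ∧ u' <:+: u

/-- The special biserial conditions on a bound quiver algebra. -/
def SpecialBiserial {Q : FinQuiver} (D : BoundQuiver Q) : Prop :=
  (∀ v : Q.V, Set.ncard {a : Q.A | Q.s a = v} ≤ 2) ∧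
  (∀ v : Q.V, Set.ncard {a : Q.A | Q.t a = v} ≤ 2) ∧
  (∀ a c d : Q.A, Q.t a = Q.s c → Q.t a = Q.s d → c ≠ d → D.rel [a, c] ∨ D.rel [a, d]) ∧
  (∀ a b c : Q.A, Q.t a = Q.s c → Q.t b = Q.s c → a ≠ b → D.rel [a, c] ∨ D.rel [b, c])

/-- A string: a nonempty composable reduced word such that no subword of it or of its
inverse lies in the ideal. -/
structure IsString {Q : FinQuiver} (D : BoundQuiver Q) (w : List (Letter Q)) : Prop where
  ne : w ≠ []
  comp : WordComposable w
  red : WordReduced w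
  avoid : ∀ u : List Q.A, u.map Sum.inl <:+: w → ¬D.rel u
  avoid_inv : ∀ u : List Q.A, (u.map Sum.inr).reverse <:+: w → ¬D.rel u

/-- The `k`-fold concatenation of a word with itself. -/
def listPow {α : Type} (u : List α) : ℕ → List α
  | 0 => []
  | n + 1 => u ++ listPow u n

/-- A band: a cyclic word all of whose powers are strings, which is not itself a proper
power of a shorter word. -/
def IsBand {Q : FinQuiver} (D : BoundQuiver Q) (b : List (Letter Q)) : Prop :=
  b ≠ [] ∧ (∀ m : ℕ, 1 ≤ m → IsString D (listPow b m)) ∧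
    ∀ (u : List (Letter Q)) (k : ℕ), 2 ≤ k → b ≠ listPow u k

/-- The `j`-th vertex visited by a (nonempty) walk `w`. -/
def wVtx {Q : FinQuiver} (w : List (Letter Q)) (hw : w ≠ []) (j : ℕ) : Q.V :=
  if j = 0 then lsrc (w.head hw) else ltgt (w.getD (j - 1) (w.head hw))

/-- The basis vector at position `j` is sent to the one at position `k` by the arrow `a`. -/
def stepsTo {Q : FinQuiver} (w : List (Letter Q)) (a : Q.A) (j k : ℕ) : Prop :=
  (k = j + 1 ∧ w[j]? = some (Sum.inl a)) ∨ (j = k + 1 ∧ w[k]? = some (Sum.inr a))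

/-- The string module `M(w)` of a nonempty walk `w`, with one standard basis vector for each
vertex visit, direct letters acting forwards and inverse letters acting backwards. -/
noncomputable def stringRep (K : Type) [Field K] (Q : FinQuiver) (w : List (Letter Q))
    (hw : w ≠ []) : QRep K Q where
  M i := ({j : Fin (w.length + 1) // wVtx w hw j = i} → K)
  φ a := Matrix.mulVecLin
    (fun (p : {j : Fin (w.length + 1) // wVtx w hw (j : ℕ) = Q.t a})
         (q : {j : Fin (w.length + 1) // wVtx w hw (j : ℕ) = Q.s a}) =>
      if stepsTo w a (q.1 : ℕ) (p.1 : ℕ) then (1 : K) else 0)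

/-- The vertex `v_j` traversed by a cyclic word (indices mod the length). -/
def bVtx {Q : FinQuiver} (b : List (Letter Q)) (hb : b ≠ []) (j : ℕ) : Q.V :=
  lsrc (b.getD (j % b.length) (b.head hb))

/-- The `j`-th letter of a cyclic word (indices mod the length). -/
def bLett {Q : FinQuiver} (b : List (Letter Q)) (hb : b ≠ []) (j : ℕ) : Letter Q :=
  b.getD (j % b.length) (b.head hb)

/-- Entry of the Jordan block of size `m` with eigenvalue `lam`. -/
noncomputable def jordEntry {K : Type} [Field K] (lam : K) {m : ℕ} (κ μ : Fin m) : K :=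
  if κ = μ then lam else if (μ : ℕ) + 1 = (κ : ℕ) then 1 else 0

/-- The matrix entry of the action of the arrow `a` on a band module, from the basis vector
`z_j^μ` to the basis vector `z_k^κ`: all letters act by identity matrices except the last
one, which acts by the Jordan block with eigenvalue `lam`. -/
noncomputable def bandEntry {Q : FinQuiver} (K : Type) [Field K] (b : List (Letter Q))
    (hb : b ≠ []) (lam : K) {m : ℕ} (a : Q.A) (k j : ℕ) (κ μ : Fin m) : K :=
  (if bLett b hb j = Sum.inl a ∧ (j + 1) % b.length = k % b.length then
    (if j % b.length + 1 = b.length then jordEntry lam κ μ else if κ = μ then 1 else 0)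
   else 0)
  + (if bLett b hb k = Sum.inr a ∧ (k + 1) % b.length = j % b.length then
    (if k % b.length + 1 = b.length then jordEntry lam κ μ else if κ = μ then 1 else 0)
   else 0)

/-- The band module `M(b, lam, m)`. -/
noncomputable def bandRep (K : Type) [Field K] (Q : FinQuiver) (b : List (Letter Q))
    (hb : b ≠ []) (lam : K) (m : ℕ) : QRep K Q where
  M i := (({j : Fin b.length // bVtx b hb j = i} × Fin m) → K)
  φ a := Matrix.mulVecLin
    (fun (p : {j : Fin b.length // bVtx b hb (j : ℕ) = Q.t a} × Fin m)
         (q : {j : Fin b.length // bVtx b hb (j : ℕ) = Q.s a} × Fin m) =>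
      bandEntry K b hb lam a (p.1.1 : ℕ) (q.1.1 : ℕ) p.2 q.2)

/-- The quiver `Q_w` having the same shape as the walk `w`. -/
@[reducible] def stringQuiver (Q : FinQuiver) (w : List (Letter Q)) : FinQuiver where
  V := Fin (w.length + 1)
  A := Fin w.length
  s j := match w.get j with
    | Sum.inl _ => j.castSucc
    | Sum.inr _ => j.succ
  t j := match w.get j with
    | Sum.inl _ => j.succ
    | Sum.inr _ => j.castSucc

/-- Cyclic successor in `Fin n`. -/
def cycSucc {n : ℕ} (j : Fin n) : Fin n := ⟨((j : ℕ) + 1) % n, Nat.mod_lt _ j.pos⟩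

/-- The cyclic quiver `Q_b` having the same shape as the cyclic word `b`. -/
@[reducible] def bandQuiver (Q : FinQuiver) (b : List (Letter Q)) : FinQuiver where
  V := Fin b.length
  A := Fin b.length
  s j := match b.get j with
    | Sum.inl _ => j
    | Sum.inr _ => cycSucc j
  t j := match b.get j with
    | Sum.inl _ => cycSucc j
    | Sum.inr _ => j

/-- A ray vector of a cone. -/
def IsRay {E : Type} [AddCommMonoid E] [Module ℝ E] (C : Set E) (u : E) : Prop :=
  u ∈ C ∧ u ≠ 0 ∧ ∀ x ∈ C, ∀ y ∈ C, u = x + y →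
    (∃ c : ℝ, 0 ≤ c ∧ x = c • u) ∧ ∃ c : ℝ, 0 ≤ c ∧ y = c • u

/-- A minimal admissible sum: a nonzero non-negative combination of elements of `S` lying in
the subspace `Rsub`, such that no nonzero non-negative combination supported on a proper
subset of its support lies in `Rsub`. -/
def IsMinAdmissibleSum {E : Type} [AddCommGroup E] [Module ℝ E] (Rsub : Set E)
    (S : Finset E) (x : E) : Prop :=
  ∃ lam : E → ℝ, (∀ s ∈ S, 0 ≤ lam s) ∧ x = ∑ s ∈ S, lam s • s ∧ x ∈ Rsub ∧ x ≠ 0 ∧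
    ¬∃ mu : E → ℝ, (∀ s ∈ S, 0 ≤ mu s) ∧
      {s ∈ S | mu s ≠ 0} ⊂ {s ∈ S | lam s ≠ 0} ∧
      (∑ s ∈ S, mu s • s) ∈ Rsub ∧ (∑ s ∈ S, mu s • s) ≠ 0

/-- The preorder induced by a walk `u` on the vertices: generated by `t(α) ≤ s(α)` over the
underlying arrows `α` of the letters of `u`. -/
def wordRel {Q : FinQuiver} (u : List (Letter Q)) : Q.V → Q.V → Prop :=
  Relation.ReflTransGen (fun x y => ∃ c ∈ u, Q.t (und c) = x ∧ Q.s (und c) = y)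

/-- `v` is obtained from the cyclic word `b` by deleting one letter. -/
def DeleteOne {Q : FinQuiver} (b v : List (Letter Q)) : Prop :=
  ∃ (l₁ l₂ : List (Letter Q)) (c : Letter Q), b = l₁ ++ c :: l₂ ∧ v = l₂ ++ l₁

/-- The generating vector of the stability space of a thin band module attached to the
`i`-th letter: `e_{v_i} - e_{v_{i+1}}` for a direct letter and its negative otherwise. -/
noncomputable def sVec {Q : FinQuiver} (b : List (Letter Q)) (hb : b ≠ []) (i : ℕ) :
    Q.V → ℝ :=
  if isDir (bLett b hb i) then
    Pi.single (bVtx b hb i) 1 - Pi.single (bVtx b hb (i + 1)) 1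
  else Pi.single (bVtx b hb (i + 1)) 1 - Pi.single (bVtx b hb i) 1

/-- The set `S = {s_1, …, s_n}` of generating vectors. -/
def Sset {Q : FinQuiver} (b : List (Letter Q)) (hb : b ≠ []) : Set (Q.V → ℝ) :=
  {u | ∃ i < b.length, u = sVec b hb i}

/-- The `g`-vector of the thin band module: the sum of the `s_i` over direct letters. -/
noncomputable def gVec {Q : FinQuiver} (b : List (Letter Q)) (hb : b ≠ []) : Q.V → ℝ :=
  ∑ i ∈ Finset.range b.length, if isDir (bLett b hb i) then sVec b hb i else 0

/-- The coefficient `ε_i` (for the mathematical index `i`, with letters `α_{i-1}`, `α_i`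
at 0-based positions `i-2`, `i-1`). -/
noncomputable def epsCoef {Q : FinQuiver} (b : List (Letter Q)) (hb : b ≠ []) (i : ℕ) : ℝ :=
  if ¬isDir (bLett b hb (i - 2)) ∧ isDir (bLett b hb (i - 1)) then 1
  else if isDir (bLett b hb (i - 2)) ∧ ¬isDir (bLett b hb (i - 1)) then -1
  else 0

/-- The vector `g_w` for `w = α_1 ⋯ α_m` (the `g`-vector of `M(w)`). -/
noncomputable def gwVec {Q : FinQuiver} (b : List (Letter Q)) (hb : b ≠ []) (m : ℕ) :
    Q.V → ℝ :=
  (if isDir (bLett b hb 0) then Pi.single (bVtx b hb 0) (1 : ℝ) else 0)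
  + (if 1 ≤ m ∧ ¬isDir (bLett b hb (m - 1)) then Pi.single (bVtx b hb m) (1 : ℝ) else 0)
  + (if 1 ≤ m ∧ isDir (bLett b hb m) then -Pi.single (bVtx b hb (m + 1)) (1 : ℝ) else 0)
  + (if isDir (bLett b hb (b.length - 1)) then -Pi.single (bVtx b hb (b.length - 1)) (1 : ℝ)
     else 0)
  + ∑ i ∈ Finset.Icc 2 m, epsCoef b hb i • (Pi.single (bVtx b hb (i - 1)) (1 : ℝ) : Q.V → ℝ)

/-- The vector `g_w'` for `w = α_1 ⋯ α_m` (equal to `-g^{M(w)ᵒᵖ}`). -/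
noncomputable def gwVec' {Q : FinQuiver} (b : List (Letter Q)) (hb : b ≠ []) (m : ℕ) :
    Q.V → ℝ :=
  (if ¬isDir (bLett b hb 0) then -Pi.single (bVtx b hb 0) (1 : ℝ) else 0)
  + (if 1 ≤ m ∧ isDir (bLett b hb (m - 1)) then -Pi.single (bVtx b hb m) (1 : ℝ) else 0)
  + (if 1 ≤ m ∧ ¬isDir (bLett b hb m) then Pi.single (bVtx b hb (m + 1)) (1 : ℝ) else 0)
  + (if ¬isDir (bLett b hb (b.length - 1)) then Pi.single (bVtx b hb (b.length - 1)) (1 : ℝ)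
     else 0)
  + ∑ i ∈ Finset.Icc 2 m, epsCoef b hb i • (Pi.single (bVtx b hb (i - 1)) (1 : ℝ) : Q.V → ℝ)


/-! Order the standard basis of `M(w)` by position along `w`. At a vertex `i`, the *pivots* of
`L_i` are the positions carrying the last nonzero coordinate of some vector of `L_i`; there are
exactly `dim L_i` of them (echelon form). Since `w` is reduced, every arrow acts on the standard
basis by a strictly increasing partial map of positions, so it sends a vector of `L` with last
nonzero coordinate at `j` to a vector of `L` with last nonzero coordinate at the image of `j`.
Hence the union `J` of all pivot sets is closed under the arrows of `Q_w`, and the standard basis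
vectors indexed by `J` span the required subrepresentation. -/

section Pivots

variable {K : Type} [Field K] {S : Type}

theorem finrank_span_image_single [Fintype S] [DecidableEq S] (P : Set S) :
    Module.finrank K (Submodule.span K ((fun p => Pi.single p (1 : K)) '' P)) = Nat.card P := by
  rw [Set.image_eq_range, Nat.card_eq_fintype_card]
  exact finrank_span_eq_card
    ((Pi.linearIndependent_single_one S K).comp _ Subtype.val_injective)

noncomputable def relMatrix (K : Type) [Field K] {S T : Type} (r : S → T → Prop) :
    Matrix T S K :=
  fun p q => if r q p then 1 else 0

theorem relMatrix_mulVec_apply [Fintype S] {T : Type} (r : S → T → Prop) (v : S → K) (p : T) :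
    (relMatrix K r).mulVec v p = ∑ q, (if r q p then 1 else 0) * v q := rfl

theorem span_image_single_le_comap_mulVecLin [Fintype S] [DecidableEq S] {T : Type} [Fintype T]
    [DecidableEq T] (M : Matrix T S K) {P : Set S} {P' : Set T}
    (hM : ∀ q ∈ P, ∀ p, M p q ≠ 0 → p ∈ P') :
    Submodule.span K ((fun q => Pi.single q (1 : K)) '' P) ≤
      (Submodule.span K ((fun p => Pi.single p (1 : K)) '' P')).comap M.mulVecLin := by
  refine Submodule.span_le.mpr ?_
  rintro _ ⟨q, hq, rfl⟩
  simp only [SetLike.mem_coe, Submodule.mem_comap, Matrix.mulVecLin_apply,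
    Matrix.mulVec_single_one]
  rw [pi_eq_sum_univ' (M.col q)]
  refine Submodule.sum_mem _ fun p _ => ?_
  by_cases hpq : M p q = 0
  · simp [hpq]
  · exact Submodule.smul_mem _ _ (Submodule.subset_span ⟨p, hM q hq p hpq, rfl⟩)

theorem linearIndependent_of_injective_lastNonzero [LinearOrder S] {ι : Type}
    {v : ι → S → K} (last : ι → S) (hlast : Function.Injective last)
    (hne : ∀ i, v i (last i) ≠ 0) (hzero : ∀ i q, last i < q → v i q = 0) :
    LinearIndependent K v := by
  rw [linearIndependent_iff']
  intro s g hsum i hi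
  by_contra hgi
  obtain ⟨m, hm, hmax⟩ :=
    (s.filter fun j => g j ≠ 0).exists_max_image last ⟨i, by simp [hi, hgi]⟩
  rw [Finset.mem_filter] at hm
  have hothers : ∀ j ∈ s, j ≠ m → g j * v j (last m) = 0 := by
    intro j hj hjm
    by_cases hgj : g j = 0
    · simp [hgj]
    · have hlt : last j < last m :=
        lt_of_le_of_ne (hmax j (by simp [hj, hgj])) (hlast.ne hjm)
      simp [hzero j _ hlt]
  have hm0 := congrFun hsum (last m)
  simp only [Finset.sum_apply, Pi.smul_apply, smul_eq_mul, Pi.zero_apply] at hm0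
  rw [Finset.sum_eq_single_of_mem m hm.1 hothers] at hm0
  exact mul_ne_zero hm.2 (hne m) hm0

variable [Fintype S] [LinearOrder S]

def pivots (V : Submodule K (S → K)) : Set S :=
  {p | ∃ v ∈ V, v p ≠ 0 ∧ ∀ q, p < q → v q = 0}

theorem exists_mem_pivots_apply_ne_zero {V : Submodule K (S → K)} {v : S → K} (hv : v ∈ V)
    (hne : v ≠ 0) : ∃ p ∈ pivots V, v p ≠ 0 := by
  obtain ⟨q, hq⟩ := Function.ne_iff.mp hne
  obtain ⟨p, hp, hmax⟩ := (Finset.univ.filter fun q => v q ≠ 0).exists_max_image id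
    ⟨q, by simpa using hq⟩
  rw [Finset.mem_filter] at hp
  refine ⟨p, ⟨v, hv, hp.2, fun q hpq => ?_⟩, hp.2⟩
  by_contra hvq
  exact (hmax q (by simpa using hvq)).not_gt hpq

theorem finrank_le_card_pivots (V : Submodule K (S → K)) :
    Module.finrank K V ≤ Nat.card (pivots V) := by
  let restrict := (LinearMap.funLeft K K (Subtype.val : pivots V → S)).comp V.subtype
  have hinj : Function.Injective restrict := by
    rw [← LinearMap.ker_eq_bot, Submodule.eq_bot_iff]
    intro x hx
    by_contra hx0
    obtain ⟨p, hp, hxp⟩ := exists_mem_pivots_apply_ne_zero x.2 (by simpa using hx0)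
    exact hxp (congrFun (LinearMap.mem_ker.mp hx) ⟨p, hp⟩)
  simpa [Module.finrank_pi, Nat.card_eq_fintype_card] using
    LinearMap.finrank_le_finrank_of_injective hinj

theorem card_pivots_le_finrank (V : Submodule K (S → K)) :
    Nat.card (pivots V) ≤ Module.finrank K V := by
  choose v hvV hne hzero using fun p : pivots V => p.2
  have hli : LinearIndependent K v :=
    linearIndependent_of_injective_lastNonzero Subtype.val Subtype.val_injective hne hzero
  rw [Nat.card_eq_fintype_card]
  exact (LinearIndependent.of_comp V.subtype (v := fun p => (⟨v p, hvV p⟩ : V))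
    hli).fintype_card_le_finrank

theorem card_pivots (V : Submodule K (S → K)) : Nat.card (pivots V) = Module.finrank K V :=
  (card_pivots_le_finrank V).antisymm (finrank_le_card_pivots V)

theorem mem_pivots_of_relMatrix {T : Type} [Fintype T] [LinearOrder T] {r : S → T → Prop}
    (hfun : ∀ {q p p'}, r q p → r q p' → p = p')
    (hmono : ∀ {q q' p p'}, r q p → r q' p' → q < q' → p < p')
    {V : Submodule K (S → K)} {W : Submodule K (T → K)}
    (hVW : ∀ v ∈ V, (relMatrix K r).mulVec v ∈ W) {q : S} {p : T} (hq : q ∈ pivots V)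
    (hqp : r q p) : p ∈ pivots W := by
  obtain ⟨v, hv, hvq, hvz⟩ := hq
  refine ⟨_, hVW v hv, ?_, fun p' hpp' => ?_⟩
  · rw [relMatrix_mulVec_apply, Finset.sum_eq_single_of_mem q (Finset.mem_univ _), if_pos hqp,
      one_mul]
    · exact hvq
    intro q' _ hq'q
    split_ifs with hq'p
    · rcases lt_or_gt_of_ne hq'q with hlt | hlt
      · exact absurd (hmono hq'p hqp hlt) (lt_irrefl p)
      · rw [hvz q' hlt, mul_zero]
    · exact zero_mul _
  · rw [relMatrix_mulVec_apply]
    refine Finset.sum_eq_zero fun q' _ => ?_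
    split_ifs with hq'p'
    · rcases lt_trichotomy q' q with hlt | rfl | hlt
      · exact absurd (hmono hq'p' hqp hlt) (not_lt.mpr hpp'.le)
      · exact absurd (hfun hqp hq'p') hpp'.ne
      · rw [hvz q' hlt, mul_zero]
    · exact zero_mul _

end Pivots

theorem List.IsChain.rel_of_getElem? {α : Type} {R : α → α → Prop} {l : List α}
    (h : l.IsChain R) {i : ℕ} {c d : α} (hc : l[i]? = some c) (hd : l[i + 1]? = some d) :
    R c d := by
  obtain ⟨hi, rfl⟩ := List.getElem?_eq_some_iff.mp hd
  obtain ⟨_, rfl⟩ := List.getElem?_eq_some_iff.mp hc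
  exact h.getElem i hi

section Strings

variable {Q : FinQuiver}

theorem WordReduced.isChain : ∀ {w : List (Letter Q)}, WordReduced w →
    w.IsChain fun c d => d ≠ linv c
  | [], _ => .nil
  | [_], _ => .singleton _
  | _ :: _ :: _, ⟨h, hw⟩ => .cons_cons h (WordReduced.isChain hw)

theorem WordComposable.isChain : ∀ {w : List (Letter Q)}, WordComposable w →
    w.IsChain fun c d => ltgt c = lsrc d
  | [], _ => .nil
  | [_], _ => .singleton _
  | _ :: _ :: _, ⟨h, hw⟩ => .cons_cons h (WordComposable.isChain hw)

variable {w : List (Letter Q)}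

theorem wVtx_succ (hw : w ≠ []) {j : ℕ} {c : Letter Q} (h : w[j]? = some c) :
    wVtx w hw (j + 1) = ltgt c := by
  simp [wVtx, List.getD_eq_getElem?_getD, h]

theorem wVtx_of_getElem? (hw : w ≠ []) (hcomp : WordComposable w) {j : ℕ} {c : Letter Q}
    (h : w[j]? = some c) : wVtx w hw j = lsrc c := by
  cases j with
  | zero =>
    obtain ⟨_, rfl⟩ := List.getElem?_eq_some_iff.mp h
    simp [wVtx, List.head_eq_getElem]
  | succ j =>
    obtain ⟨hj, -⟩ := List.getElem?_eq_some_iff.mp h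
    have hprev : w[j]? = some w[j] := List.getElem?_eq_getElem (by omega)
    rw [wVtx_succ hw hprev]
    exact hcomp.isChain.rel_of_getElem? hprev h

theorem wVtx_of_stepsTo (hw : w ≠ []) (hcomp : WordComposable w) {a : Q.A} {j k : ℕ}
    (h : stepsTo w a j k) : wVtx w hw j = Q.s a ∧ wVtx w hw k = Q.t a := by
  rcases h with ⟨rfl, h⟩ | ⟨rfl, h⟩
  · exact ⟨wVtx_of_getElem? hw hcomp h, wVtx_succ hw h⟩
  · exact ⟨wVtx_succ hw h, wVtx_of_getElem? hw hcomp h⟩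

/-- Reducedness forbids `a` followed by `a⁻¹` and `a⁻¹` followed by `a`, the only ways for one
arrow to act on two neighbouring positions. -/
theorem stepsTo_functional (hred : WordReduced w) {a : Q.A} {j k k' : ℕ}
    (h : stepsTo w a j k) (h' : stepsTo w a j k') : k = k' := by
  rcases h with ⟨rfl, h⟩ | ⟨rfl, h⟩ <;> rcases h' with ⟨rfl, h'⟩ | ⟨hk', h'⟩
  · rfl
  · subst hk'
    exact absurd rfl (hred.isChain.rel_of_getElem? h' h)
  · exact absurd rfl (hred.isChain.rel_of_getElem? h h')
  · omega

theorem stepsTo_strictMono (hred : WordReduced w) {a : Q.A} {j j' k k' : ℕ}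
    (h : stepsTo w a j k) (h' : stepsTo w a j' k') (hjj' : j < j') : k < k' := by
  rcases h with ⟨rfl, h⟩ | ⟨rfl, h⟩ <;> rcases h' with ⟨rfl, h'⟩ | ⟨rfl, h'⟩
  · omega
  · by_contra hle
    obtain rfl | rfl : k' = j ∨ k' = j + 1 := by omega
    · simp [h] at h'
    · exact absurd rfl (hred.isChain.rel_of_getElem? h h')
  · omega
  · omega

theorem exists_stepsTo_stringQuiver (j : Fin w.length) :
    ∃ a, stepsTo w a ((stringQuiver Q w).s j) ((stringQuiver Q w).t j) := by
  cases hc : w[(j : ℕ)] with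
  | inl a => exact ⟨a, by simp [stepsTo, hc]⟩
  | inr a => exact ⟨a, by simp [stepsTo, hc]⟩

end Strings

section StringModule

variable {K : Type} [Field K] {Q : FinQuiver} {w : List (Letter Q)} (hw : w ≠ [])

theorem stringRep_φ_eq_relMatrix (a : Q.A) :
    (stringRep K Q w hw).φ a =
      (relMatrix K fun (q : {j : Fin (w.length + 1) // wVtx w hw j = Q.s a})
        (p : {j : Fin (w.length + 1) // wVtx w hw j = Q.t a}) => stepsTo w a q.1 p.1).mulVecLin :=
  rfl

noncomputable def coordSubRep (J : Set (Fin (w.length + 1)))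
    (hJ : ∀ a (j k : Fin (w.length + 1)), stepsTo w a j k → j ∈ J → k ∈ J) :
    QSubRep (stringRep K Q w hw) where
  L i := Submodule.span K ((fun p => Pi.single p 1) ''
    {p : {j : Fin (w.length + 1) // wVtx w hw j = i} | p.1 ∈ J})
  compat a _ hx := by
    rw [stringRep_φ_eq_relMatrix]
    refine span_image_single_le_comap_mulVecLin _ (fun q hq p hqp => hJ a q.1 p.1 ?_ hq) hx
    by_contra hnot
    simp [relMatrix, hnot] at hqp

theorem finrank_coordSubRep (J : Set (Fin (w.length + 1)))
    (hJ : ∀ a (j k : Fin (w.length + 1)), stepsTo w a j k → j ∈ J → k ∈ J) (i : Q.V) :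
    Module.finrank K ((coordSubRep (K := K) hw J hJ).L i) =
      Nat.card {p : {j : Fin (w.length + 1) // wVtx w hw j = i} | p.1 ∈ J} :=
  finrank_span_image_single _

def pivotPositions (L : QSubRep (stringRep K Q w hw)) : Set (Fin (w.length + 1)) :=
  ⋃ i, Subtype.val '' pivots (L.L i)

theorem val_mem_pivotPositions_iff (L : QSubRep (stringRep K Q w hw)) {i : Q.V}
    (p : {j : Fin (w.length + 1) // wVtx w hw j = i}) :
    p.1 ∈ pivotPositions hw L ↔ p ∈ pivots (L.L i) := by
  refine ⟨fun hp => ?_, fun hp => Set.mem_iUnion.mpr ⟨i, p, hp, rfl⟩⟩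
  obtain ⟨i', ⟨j, hj⟩, hmem, hjp⟩ := Set.mem_iUnion.mp hp
  obtain ⟨p, rfl⟩ := p
  subst hjp hj
  exact hmem

theorem stepsTo_mem_pivotPositions (hred : WordReduced w) (hcomp : WordComposable w)
    (L : QSubRep (stringRep K Q w hw)) {a : Q.A} {j k : Fin (w.length + 1)}
    (hjk : stepsTo w a j k) (hj : j ∈ pivotPositions hw L) : k ∈ pivotPositions hw L := by
  obtain ⟨hjs, hkt⟩ := wVtx_of_stepsTo hw hcomp hjk
  rw [val_mem_pivotPositions_iff hw L ⟨j, hjs⟩] at hj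
  rw [val_mem_pivotPositions_iff hw L ⟨k, hkt⟩]
  refine mem_pivots_of_relMatrix (r := fun q p => stepsTo w a q.1 p.1)
    (fun h h' => Subtype.ext (Fin.ext (stepsTo_functional hred h h')))
    (stepsTo_strictMono hred) (fun v hv => ?_) hj hjk
  rw [← Matrix.mulVecLin_apply, ← stringRep_φ_eq_relMatrix]
  exact L.compat a v hv

end StringModule

theorem subrep_of_string_module_dediagonalised_general
    (K : Type) [Field K] (Q : FinQuiver) (D : BoundQuiver Q)
    (w : List (Letter Q)) (hw : IsString D w)
    (L : QSubRep (stringRep K Q w hw.ne)) :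
    ∃ (Lt : QSubRep (stringRep K Q w hw.ne)) (J : Set (Fin (w.length + 1))),
      (∀ j : Fin w.length, (stringQuiver Q w).s j ∈ J → (stringQuiver Q w).t j ∈ J) ∧
      (∀ i : Q.V, Lt.L i = Submodule.span K
        {f : {j : Fin (w.length + 1) // wVtx w hw.ne j = i} → K |
          ∃ (j : Fin (w.length + 1)) (hj : wVtx w hw.ne j = i), j ∈ J ∧
            f = Pi.single (⟨j, hj⟩ : {j : Fin (w.length + 1) // wVtx w hw.ne j = i})
              (1 : K)}) ∧
      ∀ i, Module.finrank K (Lt.L i) = Module.finrank K (L.L i) := by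
  set J := pivotPositions hw.ne L
  have hJ : ∀ a (j k : Fin (w.length + 1)), stepsTo w a j k → j ∈ J → k ∈ J :=
    fun _ _ _ => stepsTo_mem_pivotPositions hw.ne hw.red hw.comp L
  refine ⟨coordSubRep hw.ne J hJ, J, fun j hj => ?_, fun i => ?_, fun i => ?_⟩
  · obtain ⟨a, ha⟩ := exists_stepsTo_stringQuiver j
    exact hJ a _ _ ha hj
  · refine congrArg (Submodule.span K) (Set.ext fun f => ⟨?_, ?_⟩)
    · rintro ⟨⟨j, hj⟩, hjJ, rfl⟩
      exact ⟨j, hj, hjJ, rfl⟩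
    · rintro ⟨j, hj, hjJ, rfl⟩
      exact ⟨⟨j, hj⟩, hjJ, rfl⟩
  · have hpivots : {p | p.1 ∈ J} = pivots (L.L i) :=
      Set.ext (val_mem_pivotPositions_iff hw.ne L)
    rw [finrank_coordSubRep, hpivots]
    exact card_pivots (L.L i)

/-- Every subrepresentation of a string module over a special biserial
algebra can be replaced by one of the same dimension vector which is spanned at every
vertex by standard basis vectors, indexed by a subset `J` defining a subrepresentation of
the thin representation `T(w)`. -/
theorem subrep_of_string_module_dediagonalised
    (K : Type) [Field K] [IsAlgClosed K] (Q : FinQuiver) (D : BoundQuiver Q)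
    (hsb : SpecialBiserial D) (w : List (Letter Q)) (hw : IsString D w)
    (L : QSubRep (stringRep K Q w hw.ne)) :
    ∃ (Lt : QSubRep (stringRep K Q w hw.ne)) (J : Set (Fin (w.length + 1))),
      (∀ j : Fin w.length, (stringQuiver Q w).s j ∈ J → (stringQuiver Q w).t j ∈ J) ∧
      (∀ i : Q.V, Lt.L i = Submodule.span K
        {f : {j : Fin (w.length + 1) // wVtx w hw.ne j = i} → K |
          ∃ (j : Fin (w.length + 1)) (hj : wVtx w hw.ne j = i), j ∈ J ∧
            f = Pi.single (⟨j, hj⟩ : {j : Fin (w.length + 1) // wVtx w hw.ne j = i})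
              (1 : K)}) ∧
      ∀ i, Module.finrank K (Lt.L i) = Module.finrank K (L.L i) :=
  subrep_of_string_module_dediagonalised_general K Q D w hw L
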